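/- Let Q ≥ 2 be an integer and let χ, μ, σ ∈ ℝ satisfy 0 ≤ χ < 1, μ < 2−χ, and σ ≥ (2−χ−μ)/(1−χ). Define u : ℝ^Q → ℝ by u(x) = (1+|x|²)^{σ/2}. Then there exists a constant C > 0 such that for every x ∈ ℝ^Q, div(∇u/√(1+|∇u|²))(x) ≥ C (1+|x|)^{−μ} |∇u(x)|^{χ} / √(1+|∇u(x)|²). In particular, u is an unbounded smooth solution growing like |x|^{σ} with σ ≥ σ* = (2−χ−μ)/(1−χ), showing the sharpness of the range in which the maximum principle (the case H = 0) holds. -/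

import Mathlib

/-!
Write `t = |x|²`. Then `∇u(x) = φ(t) x` with `φ(t) = σ(1+t)^{σ/2-1}`, and for any gradient of the
form `φ(|x|²) x` the mean curvature operator equals
`(Qφ + (Q-1)tφ³ + 2tφ') / (1+tφ²)^{3/2}`.
Here `2tφ' = (σ-2)φ t/(1+t)` lies between `0` and `(σ-2)φ`, so for `Q ≥ 2` the numerator is at least
`min(σ,1) φ (1+tφ²)`, and the operator is at least `min(σ,1) φ / √(1+|∇u|²)`.
Finally `|∇u|^χ = φ^χ |x|^χ` and `φ = φ^{1-χ} φ^χ` with `φ^{1-χ} ≍ (1+|x|)^{(σ-2)(1-χ)}`, which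
dominates `(1+|x|)^{-μ} |x|^χ ≤ (1+|x|)^{χ-μ}` exactly when `σ ≥ (2-χ-μ)/(1-χ)`.
-/

open Set Filter Classical

noncomputable section

/-- The divergence of a vector field `V` on `ℝ^Q`: the sum of the partial derivatives
`∂ᵢ Vᵢ`. -/
def divg {Q : ℕ} (V : EuclideanSpace ℝ (Fin Q) → EuclideanSpace ℝ (Fin Q))
    (x : EuclideanSpace ℝ (Fin Q)) : ℝ :=
  ∑ i, fderiv ℝ V x (EuclideanSpace.single i 1) i

section Radial

variable {E : Type*} [NormedAddCommGroup E] [InnerProductSpace ℝ E]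

lemma HasDerivAt.comp_norm_sq {f : ℝ → ℝ} {f' : ℝ} {x : E} (hf : HasDerivAt f f' (‖x‖ ^ 2)) :
    HasFDerivAt (fun y : E => f (‖y‖ ^ 2)) ((2 * f') • innerSL ℝ x) x := by
  refine (hf.comp_hasFDerivAt x (hasStrictFDerivAt_norm_sq x).hasFDerivAt).congr_fderiv ?_
  ext y
  simp only [smul_apply, coe_innerSL_apply, nsmul_eq_mul, Nat.cast_ofNat, smul_eq_mul]
  ring

lemma HasDerivAt.hasGradientAt_comp_norm_sq [CompleteSpace E] {f : ℝ → ℝ} {f' : ℝ} {x : E}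
    (hf : HasDerivAt f f' (‖x‖ ^ 2)) :
    HasGradientAt (fun y : E => f (‖y‖ ^ 2)) ((2 * f') • x) x := by
  rw [hasGradientAt_iff_hasFDerivAt]
  refine hf.comp_norm_sq.congr_fderiv ?_
  ext y
  simp

lemma hasGradientAt_one_add_norm_sq_rpow [CompleteSpace E] (σ : ℝ) (x : E) :
    HasGradientAt (fun y : E => (1 + ‖y‖ ^ 2) ^ (σ / 2))
      ((σ * (1 + ‖x‖ ^ 2) ^ (σ / 2 - 1)) • x) x := by
  have hf : HasDerivAt (fun t : ℝ => (1 + t) ^ (σ / 2))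
      (σ / 2 * (1 + ‖x‖ ^ 2) ^ (σ / 2 - 1)) (‖x‖ ^ 2) :=
    ((hasDerivAt_id _).const_add 1).rpow_const (Or.inl (by positivity)) |>.congr_deriv (by simp)
  convert hf.hasGradientAt_comp_norm_sq using 2
  ring

end Radial

lemma divg_smul_self {Q : ℕ} {ψ : ℝ → ℝ} {ψ' : ℝ} {x : EuclideanSpace ℝ (Fin Q)}
    (hψ : HasDerivAt ψ ψ' (‖x‖ ^ 2)) :
    divg (fun y => ψ (‖y‖ ^ 2) • y) x = Q * ψ (‖x‖ ^ 2) + 2 * ‖x‖ ^ 2 * ψ' := by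
  have hV : HasFDerivAt (fun y => ψ (‖y‖ ^ 2) • y) _ x :=
    hψ.comp_norm_sq.smul (hasFDerivAt_id x)
  rw [divg, hV.fderiv]
  simp only [add_apply, smul_apply, ContinuousLinearMap.id_apply,
    ContinuousLinearMap.smulRight_apply, coe_innerSL_apply, EuclideanSpace.inner_single_right,
    Real.ringHom_apply, one_mul, smul_eq_mul, PiLp.add_apply, PiLp.smul_apply,
    PiLp.single_eq_same, mul_one, Finset.sum_add_distrib, Finset.sum_const, Finset.card_univ,
    Fintype.card_fin, nsmul_eq_mul, add_right_inj, EuclideanSpace.real_norm_sq_eq,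
    Finset.mul_sum, Finset.sum_mul]
  exact Finset.sum_congr rfl fun _ _ => by ring

lemma hasDerivAt_div_sqrt_one_add_mul_sq {φ : ℝ → ℝ} {φ' t : ℝ} (hφ : HasDerivAt φ φ' t)
    (ht : 0 < 1 + t * φ t ^ 2) :
    HasDerivAt (fun s => φ s / √(1 + s * φ s ^ 2))
      ((φ' - φ t ^ 3 / 2) / √(1 + t * φ t ^ 2) ^ 3) t := by
  have hW : HasDerivAt (fun s => 1 + s * φ s ^ 2) (φ t ^ 2 + t * (2 * φ t * φ')) t := by
    refine (((hasDerivAt_id t).mul (hφ.pow 2)).const_add 1).congr_deriv ?_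
    simp
  have hW0 := Real.sqrt_pos.2 ht
  refine (hφ.div (hW.sqrt ht.ne') hW0.ne').congr_deriv ?_
  have hsq := Real.sq_sqrt ht.le
  field_simp
  linear_combination 2 * φ' * hsq

lemma divg_meanCurvatureField_of_radial_gradient {Q : ℕ} {u : EuclideanSpace ℝ (Fin Q) → ℝ}
    {φ : ℝ → ℝ} {φ' : ℝ} {x : EuclideanSpace ℝ (Fin Q)}
    (hu : ∀ y, HasGradientAt u (φ (‖y‖ ^ 2) • y) y) (hφ : HasDerivAt φ φ' (‖x‖ ^ 2)) :
    divg (fun y => (√(1 + ‖gradient u y‖ ^ 2))⁻¹ • gradient u y) x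
      = (Q * φ (‖x‖ ^ 2) + (Q - 1) * ‖x‖ ^ 2 * φ (‖x‖ ^ 2) ^ 3 + 2 * ‖x‖ ^ 2 * φ')
        / √(1 + ‖x‖ ^ 2 * φ (‖x‖ ^ 2) ^ 2) ^ 3 := by
  have hV : (fun y => (√(1 + ‖gradient u y‖ ^ 2))⁻¹ • gradient u y)
      = fun y => (φ (‖y‖ ^ 2) / √(1 + ‖y‖ ^ 2 * φ (‖y‖ ^ 2) ^ 2)) • y := by
    funext y
    rw [(hu y).gradient, norm_smul, smul_smul, mul_pow, Real.norm_eq_abs, sq_abs, mul_comm,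
      div_eq_mul_inv, mul_comm (φ _ ^ 2)]
  have hW : 0 < 1 + ‖x‖ ^ 2 * φ (‖x‖ ^ 2) ^ 2 := by positivity
  rw [hV, divg_smul_self (hasDerivAt_div_sqrt_one_add_mul_sq hφ hW)]
  have hsq := Real.sq_sqrt hW.le
  have hW0 := Real.sqrt_pos.2 hW
  field_simp
  linear_combination (Q : ℝ) * φ (‖x‖ ^ 2) * hsq

lemma hasDerivAt_mul_one_add_rpow (σ p : ℝ) {t : ℝ} (ht : 0 < 1 + t) :
    HasDerivAt (fun s => σ * (1 + s) ^ p) (p * (σ * (1 + t) ^ p) / (1 + t)) t := by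
  refine (((hasDerivAt_id t).const_add 1).rpow_const (Or.inl ht.ne')).const_mul σ
    |>.congr_deriv ?_
  rw [id, Real.rpow_sub_one ht.ne']
  ring

lemma min_mul_le_meanCurvature_numerator {Q σ p t : ℝ} (hQ : 2 ≤ Q) (hp : 0 ≤ p) (ht : 0 ≤ t) :
    min σ 1 * p * (1 + t * p ^ 2)
      ≤ Q * p + (Q - 1) * t * p ^ 3 + 2 * t * ((σ / 2 - 1) * p / (1 + t)) := by
  have hpt : 0 ≤ t * p ^ 3 := by positivity
  have hm1 := min_le_right σ 1
  have hmσ := min_le_left σ 1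
  -- `2 t ((σ/2 - 1) p / (1 + t))` lies between `0` and `(σ - 2) p`
  rcases le_total σ 2 with hσ | hσ
  · have h : (σ - 2) * p ≤ 2 * t * ((σ / 2 - 1) * p / (1 + t)) := by
      rw [← sub_nonneg]
      have : 2 * t * ((σ / 2 - 1) * p / (1 + t)) - (σ - 2) * p = (2 - σ) * p / (1 + t) := by
        field_simp; ring
      rw [this]; have := mul_nonneg (sub_nonneg.2 hσ) hp; positivity
    nlinarith
  · have h : 0 ≤ 2 * t * ((σ / 2 - 1) * p / (1 + t)) := by
      have : 0 ≤ σ / 2 - 1 := by linarith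
      positivity
    nlinarith

lemma min_one_two_rpow_mul_le_one_add_sq_rpow (a : ℝ) {r : ℝ} (hr : 0 ≤ r) :
    min 1 ((2 : ℝ) ^ (-a)) * (1 + r) ^ (2 * a) ≤ (1 + r ^ 2) ^ a := by
  have h1r : 0 < 1 + r := by linarith
  have hsq : (1 + r) ^ (2 * a) = ((1 + r) ^ 2) ^ a := by
    rw [Real.rpow_mul h1r.le, Real.rpow_two]
  rcases le_total 0 a with ha | ha
  · calc min 1 ((2 : ℝ) ^ (-a)) * (1 + r) ^ (2 * a)
        ≤ (2 : ℝ) ^ (-a) * ((1 + r) ^ 2) ^ a := by rw [hsq]; gcongr; exact min_le_right _ _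
      _ = ((1 + r) ^ 2 / 2) ^ a := by
          rw [Real.div_rpow (by positivity) zero_le_two, Real.rpow_neg zero_le_two]
          ring
      _ ≤ (1 + r ^ 2) ^ a := by gcongr; nlinarith [sq_nonneg (1 - r)]
  · calc min 1 ((2 : ℝ) ^ (-a)) * (1 + r) ^ (2 * a)
        ≤ 1 * ((1 + r) ^ 2) ^ a := by rw [hsq]; gcongr; exact min_le_left _ _
      _ ≤ (1 + r ^ 2) ^ a := by
          rw [one_mul]
          exact Real.rpow_le_rpow_of_nonpos (by positivity) (by nlinarith) ha

lemma weighted_gradient_rpow_le {σ χ μ r : ℝ} (hσ : 0 < σ) (hχ : 0 ≤ χ) (hr : 0 ≤ r)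
    (hexp : χ - μ ≤ (σ - 2) * (1 - χ)) :
    σ ^ (1 - χ) * min 1 ((2 : ℝ) ^ (-((σ / 2 - 1) * (1 - χ)))) * (1 + r) ^ (-μ)
        * (σ * (1 + r ^ 2) ^ (σ / 2 - 1) * r) ^ χ
      ≤ σ * (1 + r ^ 2) ^ (σ / 2 - 1) := by
  set a := (σ / 2 - 1) * (1 - χ)
  set p := σ * (1 + r ^ 2) ^ (σ / 2 - 1)
  have h1r : 0 < 1 + r := by linarith
  have hp : 0 < p := by positivity
  have hp_split : p = σ ^ (1 - χ) * (1 + r ^ 2) ^ a * p ^ χ := by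
    have : p ^ (1 - χ) = σ ^ (1 - χ) * (1 + r ^ 2) ^ a := by
      rw [Real.mul_rpow hσ.le (by positivity), ← Real.rpow_mul (by positivity)]
    rw [← this, ← Real.rpow_add hp, sub_add_cancel, Real.rpow_one]
  have h2a : 2 * a = (σ - 2) * (1 - χ) := by ring
  have hr_pow : (1 + r) ^ (-μ) * r ^ χ ≤ (1 + r) ^ (2 * a) :=
    calc (1 + r) ^ (-μ) * r ^ χ ≤ (1 + r) ^ (-μ) * (1 + r) ^ χ := by gcongr; linarith
      _ = (1 + r) ^ (-μ + χ) := (Real.rpow_add h1r _ _).symm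
      _ ≤ (1 + r) ^ (2 * a) := Real.rpow_le_rpow_of_exponent_le (by linarith) (by linarith)
  calc σ ^ (1 - χ) * min 1 ((2 : ℝ) ^ (-a)) * (1 + r) ^ (-μ) * (p * r) ^ χ
      = σ ^ (1 - χ) * (min 1 ((2 : ℝ) ^ (-a)) * ((1 + r) ^ (-μ) * r ^ χ)) * p ^ χ := by
        rw [Real.mul_rpow hp.le hr]; ring
    _ ≤ σ ^ (1 - χ) * (min 1 ((2 : ℝ) ^ (-a)) * (1 + r) ^ (2 * a)) * p ^ χ := by gcongr
    _ ≤ σ ^ (1 - χ) * (1 + r ^ 2) ^ a * p ^ χ := by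
        gcongr; exact min_one_two_rpow_mul_le_one_add_sq_rpow a hr
    _ = p := hp_split.symm

/-- Sharpness of the maximum principle: for `0 ≤ χ < 1`, `μ < 2−χ` and
`σ ≥ (2−χ−μ)/(1−χ)`, the unbounded function `u(x) = (1+|x|²)^{σ/2}` on `ℝ^Q`, `Q ≥ 2`,
satisfies `div(∇u/√(1+|∇u|²)) ≥ C(1+|x|)^{−μ}|∇u|^χ/√(1+|∇u|²)` for some `C > 0`. -/
theorem statement14 (Q : ℕ) (hQ : 2 ≤ Q) (χ μ σ : ℝ)
    (hχ0 : 0 ≤ χ) (hχ1 : χ < 1) (hμ : μ < 2 - χ) (hσ : (2 - χ - μ) / (1 - χ) ≤ σ) :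
    ∃ C : ℝ, 0 < C ∧ ∀ x : EuclideanSpace ℝ (Fin Q),
      C * (1 + ‖x‖) ^ (-μ) *
        ‖gradient (fun y : EuclideanSpace ℝ (Fin Q) => (1 + ‖y‖ ^ 2) ^ (σ / 2)) x‖ ^ χ /
        Real.sqrt (1 + ‖gradient
          (fun y : EuclideanSpace ℝ (Fin Q) => (1 + ‖y‖ ^ 2) ^ (σ / 2)) x‖ ^ 2)
      ≤ divg (fun y : EuclideanSpace ℝ (Fin Q) =>
          (Real.sqrt (1 + ‖gradient
            (fun z : EuclideanSpace ℝ (Fin Q) => (1 + ‖z‖ ^ 2) ^ (σ / 2)) y‖ ^ 2))⁻¹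
          • gradient (fun z : EuclideanSpace ℝ (Fin Q) => (1 + ‖z‖ ^ 2) ^ (σ / 2)) y) x := by
  have h1χ : 0 < 1 - χ := by linarith
  have hσ0 : 0 < σ := (div_pos (by linarith) h1χ).trans_le hσ
  have hexp : χ - μ ≤ (σ - 2) * (1 - χ) := by rw [div_le_iff₀ h1χ] at hσ; linarith
  refine ⟨min σ 1 * (σ ^ (1 - χ) * min 1 ((2 : ℝ) ^ (-((σ / 2 - 1) * (1 - χ))))),
    by positivity, fun x => ?_⟩
  have hu := hasGradientAt_one_add_norm_sq_rpow (E := EuclideanSpace ℝ (Fin Q)) σ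
  rw [divg_meanCurvatureField_of_radial_gradient hu
      (hasDerivAt_mul_one_add_rpow σ (σ / 2 - 1) (by positivity)),
    (hu x).gradient, norm_smul, Real.norm_of_nonneg (by positivity), mul_pow, mul_comm (_ ^ 2)]
  set r := ‖x‖
  set p := σ * (1 + r ^ 2) ^ (σ / 2 - 1)
  have hp : 0 < p := by positivity
  have hW : 0 < 1 + r ^ 2 * p ^ 2 := by positivity
  calc _ = min σ 1 * (σ ^ (1 - χ) * min 1 ((2 : ℝ) ^ (-((σ / 2 - 1) * (1 - χ))))
            * (1 + r) ^ (-μ) * (p * r) ^ χ) / √(1 + r ^ 2 * p ^ 2) := by ring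
    _ ≤ min σ 1 * p / √(1 + r ^ 2 * p ^ 2) := by
        gcongr
        exact weighted_gradient_rpow_le hσ0 hχ0 (norm_nonneg x) hexp
    _ = min σ 1 * p * √(1 + r ^ 2 * p ^ 2) ^ 2 / √(1 + r ^ 2 * p ^ 2) ^ 3 := by
        field_simp
    _ = min σ 1 * p * (1 + r ^ 2 * p ^ 2) / √(1 + r ^ 2 * p ^ 2) ^ 3 := by
        rw [Real.sq_sqrt hW.le]
    _ ≤ _ := by
        gcongr
        exact min_mul_le_meanCurvature_numerator (by exact_mod_cast hQ) hp.le (by positivity)
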